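/- arXiv:1812.03378 — 2 statements merged into one kernel-verified Lean document; each statement's English description precedes it below -/
import Mathlib

section
/- Danskin-type derivative formula: Let O ⋐ Ω and u, φ ∈ C¹(Ω; ℝᴺ), H ∈ C¹(Ω × ℝᴺ × ℝ^{N×n}). Define E_∞(v, O) = max_{Ō} H(·, v, Dv) and let O(u) = Argmax{H(·,u,Du) : Ō}. Then the right derivative at t = 0 of t ↦ E_∞(u + tφ, O) exists and equals max_{O(u)} ( H_P(·,u,Du) : Dφ + H_η(·,u,Du) · φ ), where ':' is the Frobenius inner product. -/
/-- The supremal functional `E_∞(v, O) = max_{closure O} H(·, v, Dv)`. -/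
noncomputable def Einf {n N : ℕ}
    (H : EuclideanSpace ℝ (Fin n) → EuclideanSpace ℝ (Fin N) →
      (EuclideanSpace ℝ (Fin n) →L[ℝ] EuclideanSpace ℝ (Fin N)) → ℝ)
    (O : Set (EuclideanSpace ℝ (Fin n)))
    (v : EuclideanSpace ℝ (Fin n) → EuclideanSpace ℝ (Fin N)) : ℝ :=
  sSup ((fun x => H x (v x) (fderiv ℝ v x)) '' closure O)

/-- The set of maximizers of `h` over `closure O`. -/
def argmaxSet {n : ℕ} (h : EuclideanSpace ℝ (Fin n) → ℝ)
    (O : Set (EuclideanSpace ℝ (Fin n))) : Set (EuclideanSpace ℝ (Fin n)) :=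
  {x ∈ closure O | ∀ y ∈ closure O, h y ≤ h x}

/-- The first variation `H_P(·,u,Du) : Dφ + H_η(·,u,Du) ⋅ φ`, expressed as the
derivative of `(η,P) ↦ H(x,η,P)` at `(u x, Du x)` in the direction `(φ x, Dφ x)`. -/
noncomputable def firstVar {n N : ℕ}
    (H : EuclideanSpace ℝ (Fin n) → EuclideanSpace ℝ (Fin N) →
      (EuclideanSpace ℝ (Fin n) →L[ℝ] EuclideanSpace ℝ (Fin N)) → ℝ)
    (u φ : EuclideanSpace ℝ (Fin n) → EuclideanSpace ℝ (Fin N))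
    (x : EuclideanSpace ℝ (Fin n)) : ℝ :=
  fderiv ℝ (fun p : EuclideanSpace ℝ (Fin N) ×
      (EuclideanSpace ℝ (Fin n) →L[ℝ] EuclideanSpace ℝ (Fin N)) => H x p.1 p.2)
    (u x, fderiv ℝ u x) (φ x, fderiv ℝ φ x)

set_option maxHeartbeats 1600000 in
/-- Danskin-type right derivative: for `O ⋐ Ω` and `u, φ` of class `C¹`,
the right derivative at `t = 0` of `t ↦ E_∞(u + tφ, O)` exists and equals
`max_{argmax} (H_P(·,u,Du) : Dφ + H_η(·,u,Du) ⋅ φ)`. -/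
theorem danskin_right_derivative
    (n N : ℕ) (Ω O : Set (EuclideanSpace ℝ (Fin n)))
    (hΩ : IsOpen Ω) (hO : IsOpen O) (hne : O.Nonempty)
    (hOc : IsCompact (closure O)) (hOΩ : closure O ⊆ Ω)
    (H : EuclideanSpace ℝ (Fin n) → EuclideanSpace ℝ (Fin N) →
      (EuclideanSpace ℝ (Fin n) →L[ℝ] EuclideanSpace ℝ (Fin N)) → ℝ)
    (hH : ContDiff ℝ 1 fun p : EuclideanSpace ℝ (Fin n) × EuclideanSpace ℝ (Fin N) ×
      (EuclideanSpace ℝ (Fin n) →L[ℝ] EuclideanSpace ℝ (Fin N)) => H p.1 p.2.1 p.2.2)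
    (u φ : EuclideanSpace ℝ (Fin n) → EuclideanSpace ℝ (Fin N))
    (hu : ContDiff ℝ 1 u) (hφ : ContDiff ℝ 1 φ) :
    HasDerivWithinAt (fun t : ℝ => Einf H O fun x => u x + t • φ x)
      (sSup (firstVar H u φ '' argmaxSet (fun x => H x (u x) (fderiv ℝ u x)) O))
      (Set.Ici 0) 0 := by
  classical
  have h1 : (1 : WithTop ℕ∞) ≠ 0 := one_ne_zero
  set K := closure O with hKdef
  have hKne : K.Nonempty := hne.closure
  set F : EuclideanSpace ℝ (Fin n) × EuclideanSpace ℝ (Fin N) ×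
      (EuclideanSpace ℝ (Fin n) →L[ℝ] EuclideanSpace ℝ (Fin N)) → ℝ :=
    fun p => H p.1 p.2.1 p.2.2 with hFdef
  have hFd : Differentiable ℝ F := hH.differentiable h1
  have hFc : Continuous (fderiv ℝ F) := hH.continuous_fderiv h1
  have hud : Differentiable ℝ u := hu.differentiable h1
  have hφd : Differentiable ℝ φ := hφ.differentiable h1
  have hDu : Continuous (fderiv ℝ u) := hu.continuous_fderiv h1
  have hDφ : Continuous (fderiv ℝ φ) := hφ.continuous_fderiv h1
  set G : ℝ → EuclideanSpace ℝ (Fin n) → ℝ :=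
    fun t x => F (x, u x + t • φ x, fderiv ℝ u x + t • fderiv ℝ φ x) with hGdef
  set W : ℝ → EuclideanSpace ℝ (Fin n) → ℝ :=
    fun s x => fderiv ℝ F (x, u x + s • φ x, fderiv ℝ u x + s • fderiv ℝ φ x)
      (0, φ x, fderiv ℝ φ x) with hWdef
  set V : EuclideanSpace ℝ (Fin n) → ℝ := firstVar H u φ with hVdef
  set g0 : EuclideanSpace ℝ (Fin n) → ℝ := fun x => H x (u x) (fderiv ℝ u x) with hg0def
  -- the curve s ↦ (x, u x + s φ x, Du x + s Dφ x)
  have hcurve : ∀ (x : EuclideanSpace ℝ (Fin n)) (s : ℝ),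
      HasDerivAt (fun t : ℝ => ((x, u x + t • φ x, fderiv ℝ u x + t • fderiv ℝ φ x) :
        EuclideanSpace ℝ (Fin n) × EuclideanSpace ℝ (Fin N) ×
          (EuclideanSpace ℝ (Fin n) →L[ℝ] EuclideanSpace ℝ (Fin N))))
        (0, φ x, fderiv ℝ φ x) s := by
    intro x s
    refine (hasDerivAt_const s x).prodMk (HasDerivAt.prodMk ?_ ?_)
    · simpa using (((hasDerivAt_id s).smul_const (φ x)).const_add (u x))
    · simpa using (((hasDerivAt_id s).smul_const (fderiv ℝ φ x)).const_add (fderiv ℝ u x))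
  have hGt : ∀ (x : EuclideanSpace ℝ (Fin n)) (s : ℝ),
      HasDerivAt (fun t => G t x) (W s x) s := by
    intro x s
    exact (hFd _).hasFDerivAt.comp_hasDerivAt s (hcurve x s)
  -- identification of firstVar with W 0
  have hVW : ∀ x, V x = W 0 x := by
    intro x
    have hmk : HasFDerivAt (fun p : EuclideanSpace ℝ (Fin N) ×
        (EuclideanSpace ℝ (Fin n) →L[ℝ] EuclideanSpace ℝ (Fin N)) => F (x, p))
        ((fderiv ℝ F (x, u x, fderiv ℝ u x)).comp
          (ContinuousLinearMap.inr ℝ _ _)) (u x, fderiv ℝ u x) :=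
      (hFd _).hasFDerivAt.comp _ (hasFDerivAt_prodMk_right x (u x, fderiv ℝ u x))
    have : fderiv ℝ (fun p : EuclideanSpace ℝ (Fin N) ×
        (EuclideanSpace ℝ (Fin n) →L[ℝ] EuclideanSpace ℝ (Fin N)) => H x p.1 p.2)
        (u x, fderiv ℝ u x) = (fderiv ℝ F (x, u x, fderiv ℝ u x)).comp
          (ContinuousLinearMap.inr ℝ _ _) := hmk.fderiv
    simp only [hVdef, firstVar, this, hWdef, zero_smul, add_zero,
      ContinuousLinearMap.comp_apply, ContinuousLinearMap.inr_apply]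
    rw [show (0:ℝ) • fderiv ℝ φ x = 0 by ext y; simp, add_zero]
  -- continuity facts
  have hWc : Continuous fun q : ℝ × EuclideanSpace ℝ (Fin n) => W q.1 q.2 := by
    have hinner : Continuous fun q : ℝ × EuclideanSpace ℝ (Fin n) =>
        ((q.2, u q.2 + q.1 • φ q.2, fderiv ℝ u q.2 + q.1 • fderiv ℝ φ q.2) :
          EuclideanSpace ℝ (Fin n) × EuclideanSpace ℝ (Fin N) ×
            (EuclideanSpace ℝ (Fin n) →L[ℝ] EuclideanSpace ℝ (Fin N))) := by
      refine continuous_snd.prodMk (Continuous.prodMk ?_ ?_)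
      · exact (hud.continuous.comp continuous_snd).add
          (continuous_fst.smul (hφd.continuous.comp continuous_snd))
      · exact (hDu.comp continuous_snd).add
          (continuous_fst.smul (hDφ.comp continuous_snd))
    have hdir : Continuous fun q : ℝ × EuclideanSpace ℝ (Fin n) =>
        ((0, φ q.2, fderiv ℝ φ q.2) :
          EuclideanSpace ℝ (Fin n) × EuclideanSpace ℝ (Fin N) ×
            (EuclideanSpace ℝ (Fin n) →L[ℝ] EuclideanSpace ℝ (Fin N))) :=
      continuous_const.prodMk ((hφd.continuous.comp continuous_snd).prodMk
        (hDφ.comp continuous_snd))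
    exact isBoundedBilinearMap_apply.continuous.comp ((hFc.comp hinner).prodMk hdir)
  have hVc : Continuous V := by
    have : Continuous fun x : EuclideanSpace ℝ (Fin n) => W 0 x :=
      hWc.comp (continuous_const.prodMk continuous_id)
    simpa [funext hVW] using this
  have hGc : ∀ t, Continuous (G t) := by
    intro t
    refine hH.continuous.comp (continuous_id.prodMk (Continuous.prodMk ?_ ?_))
    · exact hud.continuous.add (hφd.continuous.const_smul t)
    · exact hDu.add (hDφ.const_smul t)
  have hg0c : Continuous g0 :=
    hH.continuous.comp (continuous_id.prodMk (hud.continuous.prodMk hDu))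
  have hG0 : ∀ x, G 0 x = g0 x := by intro x; simp [hGdef, hg0def, hFdef, show (0:ℝ) • fderiv ℝ φ x = 0 by ext y; simp]
  -- the functional
  set f : ℝ → ℝ := fun t => sSup (G t '' K) with hfdef
  have hEinf : (fun t : ℝ => Einf H O fun x => u x + t • φ x) = f := by
    funext t
    simp only [hfdef, Einf]
    congr 1
    refine Set.image_congr fun x _ => ?_
    have hfd : fderiv ℝ (fun y => u y + t • φ y) x
        = fderiv ℝ u x + t • fderiv ℝ φ x :=
      ((hud x).hasFDerivAt.add ((hφd x).hasFDerivAt.const_smul t)).fderiv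
    rw [hfd]
  -- maximizers
  set f0 : ℝ := sSup (g0 '' K) with hf0def
  have hbdd : BddAbove (g0 '' K) := hOc.bddAbove_image hg0c.continuousOn
  have hg0le : ∀ x ∈ K, g0 x ≤ f0 := fun x hx => le_csSup hbdd ⟨x, hx, rfl⟩
  set M : Set (EuclideanSpace ℝ (Fin n)) := argmaxSet g0 O with hMdef
  have hMeq : M = {x ∈ K | f0 ≤ g0 x} := by
    ext x
    simp only [hMdef, argmaxSet, Set.mem_setOf_eq, ← hKdef]
    refine and_congr_right fun hx => ⟨fun h => ?_, fun h y hy => (hg0le y hy).trans h⟩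
    exact csSup_le (hKne.image g0) (by rintro _ ⟨y, hy, rfl⟩; exact h y hy)
  have hMc : IsCompact M := by
    refine hOc.of_isClosed_subset ?_ ?_
    · rw [hMeq]
      exact isClosed_closure.inter (isClosed_Ici.preimage hg0c)
    · rw [hMeq]; exact fun x hx => hx.1
  obtain ⟨z, hzK, hzeq⟩ := hOc.exists_sSup_image_eq hKne hg0c.continuousOn
  have hzM : z ∈ M := by rw [hMeq]; exact ⟨hzK, le_of_eq hzeq⟩
  have hMne : M.Nonempty := ⟨z, hzM⟩
  have hMK : M ⊆ K := by rw [hMeq]; exact fun x hx => hx.1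
  have hg0M : ∀ x ∈ M, g0 x = f0 := by
    intro x hx
    rw [hMeq] at hx
    exact le_antisymm (hg0le x hx.1) hx.2
  -- the claimed derivative
  set D : ℝ := sSup (V '' M) with hDdef
  have hVbddM : BddAbove (V '' M) := hMc.bddAbove_image hVc.continuousOn
  have hVleD : ∀ x ∈ M, V x ≤ D := fun x hx => le_csSup hVbddM ⟨x, hx, rfl⟩
  obtain ⟨xs, hxsM, hxseq⟩ := hMc.exists_sSup_image_eq hMne hVc.continuousOn
  set C : ℝ := sSup (V '' K) with hCdef
  have hVleC : ∀ x ∈ K, V x ≤ C :=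
    fun x hx => le_csSup (hOc.bddAbove_image hVc.continuousOn) ⟨x, hx, rfl⟩
  -- basic bounds on f
  have hfbdd : ∀ t, BddAbove (G t '' K) :=
    fun t => hOc.bddAbove_image (hGc t).continuousOn
  have hfge : ∀ t, ∀ x ∈ K, G t x ≤ f t :=
    fun t x hx => le_csSup (hfbdd t) ⟨x, hx, rfl⟩
  have hf0 : f 0 = f0 := by
    simp only [hfdef, hf0def]
    congr 1
    exact Set.image_congr fun x _ => hG0 x
  -- reduce the goal
  rw [hEinf]
  show HasDerivWithinAt f D (Set.Ici 0) 0
  rw [hasDerivWithinAt_iff_tendsto_slope, Set.Ici_sdiff_left]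
  rw [Metric.tendsto_nhds]
  intro ε hε
  -- lower bound
  have hlow : ∀ᶠ t in nhdsWithin 0 (Set.Ioi (0:ℝ)), D - ε < slope f 0 t := by
    have hx0deriv : HasDerivAt (fun s => G s xs) D 0 := by
      have := hGt xs 0
      rwa [← hVW, ← hxseq, ← hDdef] at this
    have hsl : Filter.Tendsto (slope (fun s => G s xs) 0)
        (nhdsWithin 0 {(0:ℝ)}ᶜ) (nhds D) := hasDerivAt_iff_tendsto_slope.1 hx0deriv
    have h1 : ∀ᶠ t in nhdsWithin 0 {(0:ℝ)}ᶜ, D - ε < slope (fun s => G s xs) 0 t :=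
      hsl.eventually (eventually_gt_nhds (by linarith))
    have h2 : nhdsWithin (0:ℝ) (Set.Ioi 0) ≤ nhdsWithin 0 {(0:ℝ)}ᶜ :=
      nhdsWithin_mono _ (fun t ht => ne_of_gt ht)
    filter_upwards [h2 h1, self_mem_nhdsWithin] with t h1t ht
    refine lt_of_lt_of_le h1t ?_
    have ht' : (0:ℝ) < t := ht
    have hnum : G t xs - G 0 xs ≤ f t - f 0 := by
      have h3 : G t xs ≤ f t := hfge t xs (hMK hxsM)
      have h4 : f 0 = G 0 xs := by rw [hf0, hG0, hg0M xs hxsM]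
      linarith
    simp only [slope_def_field, sub_zero]
    exact div_le_div_of_nonneg_right hnum ht'.le |>.trans_eq rfl
  -- upper bound
  have hupp : ∀ᶠ t in nhdsWithin 0 (Set.Ioi (0:ℝ)), slope f 0 t < D + ε := by
    have hε2 : (0:ℝ) < ε / 2 := by linarith
    -- uniform closeness of W s to V on K, via the tube lemma
    obtain ⟨δ₁, hδ₁pos, hδ₁⟩ : ∃ δ₁ > 0, ∀ s : ℝ, |s| < δ₁ → ∀ x ∈ K,
        W s x < V x + ε / 2 := by
      have hUopen : IsOpen {q : ℝ × EuclideanSpace ℝ (Fin n) |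
          W q.1 q.2 - V q.2 < ε / 2} :=
        isOpen_lt (hWc.sub (hVc.comp continuous_snd)) continuous_const
      have hsub : ({0} : Set ℝ) ×ˢ K ⊆
          {q : ℝ × EuclideanSpace ℝ (Fin n) | W q.1 q.2 - V q.2 < ε / 2} := by
        rintro ⟨s, x⟩ ⟨hs, hx⟩
        simp only [Set.mem_singleton_iff] at hs
        subst hs
        simp only [Set.mem_setOf_eq, hVW x, sub_self]
        exact hε2
      obtain ⟨U, Vset, hUo, hVo, h0U, hKV, hUV⟩ :=
        generalized_tube_lemma isCompact_singleton hOc hUopen hsub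
      obtain ⟨δ₁, hδ₁pos, hball⟩ := Metric.isOpen_iff.1 hUo 0 (h0U rfl)
      refine ⟨δ₁, hδ₁pos, fun s hs x hx => ?_⟩
      have hmem : (s, x) ∈ {q : ℝ × EuclideanSpace ℝ (Fin n) |
          W q.1 q.2 - V q.2 < ε / 2} := by
        refine hUV ⟨hball ?_, hKV hx⟩
        simpa [Real.dist_eq] using hs
      have := hmem
      simp only [Set.mem_setOf_eq] at this
      linarith
    -- maximizer of G t and mean value theorem
    have hslope_bound : ∀ t : ℝ, 0 < t → t < δ₁ →
        ∃ x ∈ K, ∃ c ∈ Set.Ioo (0:ℝ) t,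
          f t - f 0 = (g0 x - f0) + t * W c x := by
      intro t ht htδ
      obtain ⟨x, hxK, hfx⟩ := hOc.exists_sSup_image_eq hKne (hGc t).continuousOn
      have hcont : ContinuousOn (fun s => G s x) (Set.Icc 0 t) :=
        fun s _ => ((hGt x s).continuousAt).continuousWithinAt
      obtain ⟨c, hc, hceq⟩ := exists_hasDerivAt_eq_slope (fun s => G s x)
        (fun s => W s x) ht hcont (fun s _ => hGt x s)
      refine ⟨x, hxK, c, hc, ?_⟩
      have hΔ : G t x - G 0 x = t * W c x := by
        rw [hceq, sub_zero]
        field_simp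
      have hG0x := hG0 x
      have hfx' : f t = G t x := hfx
      rw [hf0, hfx']
      linarith
    set N' : Set (EuclideanSpace ℝ (Fin n)) := {x ∈ K | D + ε / 2 ≤ V x} with hN'def
    have hVlt : ∀ x ∈ K, x ∉ N' → V x < D + ε / 2 := by
      intro x hx hxn
      by_contra hcon
      exact hxn ⟨hx, le_of_not_gt hcon⟩
    -- main eventual estimate
    have hkey : ∀ᶠ t in nhdsWithin 0 (Set.Ioi (0:ℝ)), f t - f 0 < t * (D + ε) := by
      rcases Set.eq_empty_or_nonempty N' with hNe | hNne
      · have h1 : ∀ᶠ t in nhdsWithin 0 (Set.Ioi (0:ℝ)), t < δ₁ :=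
          (eventually_lt_nhds hδ₁pos).filter_mono nhdsWithin_le_nhds
        filter_upwards [h1, self_mem_nhdsWithin] with t htδ ht
        have ht' : (0:ℝ) < t := ht
        obtain ⟨x, hxK, c, hc, hbound⟩ := hslope_bound t ht' htδ
        have hcW : W c x < V x + ε / 2 := by
          refine hδ₁ c ?_ x hxK
          rw [abs_of_pos hc.1]
          exact hc.2.trans htδ
        have hVx : V x < D + ε / 2 := by
          refine hVlt x hxK ?_
          rw [hNe]
          exact Set.notMem_empty x
        have hg0x : g0 x ≤ f0 := hg0le x hxK
        have m1 : t * W c x < t * (V x + ε / 2) := mul_lt_mul_of_pos_left hcW ht'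
        have m2 : t * (V x + ε / 2) < t * (D + ε) :=
          mul_lt_mul_of_pos_left (by linarith) ht'
        linarith
      · have hN'c : IsCompact N' := by
          have heq : N' = K ∩ V ⁻¹' Set.Ici (D + ε / 2) := by
            ext x
            simp [hN'def, Set.mem_sep_iff, Set.mem_preimage, Set.mem_Ici]
          refine hOc.of_isClosed_subset ?_ ?_
          · rw [heq]
            exact isClosed_closure.inter (isClosed_Ici.preimage hVc)
          · rw [heq]; exact Set.inter_subset_left
        obtain ⟨x₀, hx₀N, hx₀eq⟩ := hN'c.exists_sSup_image_eq hNne hg0c.continuousOn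
        have hub : ∀ x ∈ N', g0 x ≤ g0 x₀ := fun x hx =>
          (le_csSup (hN'c.bddAbove_image hg0c.continuousOn) ⟨x, hx, rfl⟩).trans
            hx₀eq.le
        have hx₀M : x₀ ∉ M := by
          intro hmem
          have h3 := hVleD x₀ hmem
          have h4 := hx₀N.2
          linarith
        have hδ' : 0 < f0 - g0 x₀ := by
          have hle := hg0le x₀ hx₀N.1
          rcases lt_or_eq_of_le hle with h | h
          · linarith
          · exact absurd (by rw [hMeq]; exact ⟨hx₀N.1, h.ge⟩) hx₀M
        set A : ℝ := |C - D| + ε + 1 with hAdef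
        have hApos : (0:ℝ) < A := by positivity
        have hδ₂pos : 0 < (f0 - g0 x₀) / A := div_pos hδ' hApos
        have h1 : ∀ᶠ t in nhdsWithin 0 (Set.Ioi (0:ℝ)), t < δ₁ :=
          (eventually_lt_nhds hδ₁pos).filter_mono nhdsWithin_le_nhds
        have h2 : ∀ᶠ t in nhdsWithin 0 (Set.Ioi (0:ℝ)), t < (f0 - g0 x₀) / A :=
          (eventually_lt_nhds hδ₂pos).filter_mono nhdsWithin_le_nhds
        filter_upwards [h1, h2, self_mem_nhdsWithin] with t htδ htδ₂ ht
        have ht' : (0:ℝ) < t := ht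
        obtain ⟨x, hxK, c, hc, hbound⟩ := hslope_bound t ht' htδ
        have hcW : W c x < V x + ε / 2 := by
          refine hδ₁ c ?_ x hxK
          rw [abs_of_pos hc.1]
          exact hc.2.trans htδ
        have hg0x : g0 x ≤ f0 := hg0le x hxK
        by_cases hxN : x ∈ N'
        · have hg0x₀ : g0 x ≤ g0 x₀ := hub x hxN
          have hVxC : V x ≤ C := hVleC x hxK
          have habs : C - D ≤ |C - D| := le_abs_self _
          have hmul : t * A < f0 - g0 x₀ := (lt_div_iff₀ hApos).1 htδ₂
          have m1 : t * W c x < t * (C + ε / 2) :=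
            mul_lt_mul_of_pos_left (by linarith) ht'
          have m2 : t * (C + ε / 2 - A) ≤ t * (D + ε) :=
            mul_le_mul_of_nonneg_left (by linarith) ht'.le
          have hr : t * (C + ε / 2 - A) = t * (C + ε / 2) - t * A := by ring
          have step : f t - f 0 < t * (C + ε / 2) - t * A := by
            clear_value A C D V W G F g0 f0 f M N'
            linarith
          rw [← hr] at step
          exact step.trans_le m2
        · have hVx : V x < D + ε / 2 := hVlt x hxK hxN
          have m1 : t * W c x < t * (V x + ε / 2) := mul_lt_mul_of_pos_left hcW ht'
          have m2 : t * (V x + ε / 2) < t * (D + ε) :=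
            mul_lt_mul_of_pos_left (by linarith) ht'
          linarith
    filter_upwards [hkey, self_mem_nhdsWithin] with t hkt ht
    have ht' : (0:ℝ) < t := ht
    simp only [slope_def_field, sub_zero]
    rw [div_lt_iff₀ ht']
    linarith [hkt]
  filter_upwards [hlow, hupp] with t h1 h2
  rw [Real.dist_eq, abs_sub_lt_iff]
  exact ⟨by linarith, by linarith⟩
end

section
/- Danskin-type left derivative: Under the same hypotheses, the left derivative at t = 0 of t ↦ E_∞(u + tφ, O) exists and equals min_{O(u)} ( H_P(·,u,Du) : Dφ + H_η(·,u,Du) · φ ). -/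
open Set Filter Topology

lemma sSup_image_eq_max {α : Type*} {K : Set α} {f : α → ℝ} {x : α}
    (hx : x ∈ K) (hmax : ∀ y ∈ K, f y ≤ f x) : sSup (f '' K) = f x :=
  le_antisymm (csSup_le ⟨f x, ⟨x, hx, rfl⟩⟩ (by rintro b ⟨y, hy, rfl⟩; exact hmax y hy))
    (le_csSup ⟨f x, by rintro b ⟨y, hy, rfl⟩; exact hmax y hy⟩ ⟨x, hx, rfl⟩)

lemma sInf_image_eq_min {α : Type*} {K : Set α} {f : α → ℝ} {x : α}
    (hx : x ∈ K) (hmin : ∀ y ∈ K, f x ≤ f y) : sInf (f '' K) = f x :=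
  le_antisymm (csInf_le ⟨f x, by rintro b ⟨y, hy, rfl⟩; exact hmin y hy⟩ ⟨x, hx, rfl⟩)
    (le_csInf ⟨f x, ⟨x, hx, rfl⟩⟩ (by rintro b ⟨y, hy, rfl⟩; exact hmin y hy))

lemma tube_eventually {X : Type*} [TopologicalSpace X] {K : Set X} (hK : IsCompact K)
    {W : Set (X × ℝ)} (hW : IsOpen W) (h : ∀ x ∈ K, (x, (0:ℝ)) ∈ W) :
    ∀ᶠ t in 𝓝 (0:ℝ), ∀ x ∈ K, (x, t) ∈ W := by
  obtain ⟨U, V, _, hV, hKU, h0V, hUV⟩ := generalized_tube_lemma hK isCompact_singleton hW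
    (by rintro ⟨x, t⟩ ⟨hx, ht⟩; rw [mem_singleton_iff] at ht; subst ht; exact h x hx)
  filter_upwards [hV.mem_nhds (h0V rfl)] with t ht x hx
  exact hUV ⟨hKU hx, ht⟩

theorem danskin_aux {E : Type*} [TopologicalSpace E] {K : Set E} (hK : IsCompact K)
    (hne : K.Nonempty) (g D : E → ℝ → ℝ)
    (hg : Continuous fun p : E × ℝ => g p.1 p.2)
    (hD : Continuous fun p : E × ℝ => D p.1 p.2)
    (hder : ∀ x t, HasDerivAt (g x) (D x t) t) :
    Tendsto (slope (fun t => sSup ((fun x => g x t) '' K)) 0) (𝓝[Iio 0] 0)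
      (𝓝 (sInf ((fun x => D x 0) '' {x ∈ K | ∀ y ∈ K, g y 0 ≤ g x 0}))) := by
  set F : ℝ → ℝ := fun t => sSup ((fun x => g x t) '' K) with hF
  set A : Set E := {x ∈ K | ∀ y ∈ K, g y 0 ≤ g x 0} with hA
  set m : ℝ := sInf ((fun x => D x 0) '' A) with hmdef
  have hgx : ∀ t : ℝ, Continuous fun x => g x t := fun t =>
    hg.comp (continuous_id.prodMk continuous_const)
  have hDx : ∀ t : ℝ, Continuous fun x => D x t := fun t =>
    hD.comp (continuous_id.prodMk continuous_const)
  have hgt : ∀ x, Continuous fun t => g x t := fun x =>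
    hg.comp (continuous_const.prodMk continuous_id)
  have hmax : ∀ t : ℝ, ∃ x ∈ K, ∀ y ∈ K, g y t ≤ g x t := by
    intro t
    obtain ⟨x, hx, hmx⟩ := hK.exists_isMaxOn hne (hgx t).continuousOn
    exact ⟨x, hx, fun y hy => hmx hy⟩
  have hbdd : ∀ t : ℝ, BddAbove ((fun x => g x t) '' K) := fun t =>
    (hK.image_of_continuousOn (hgx t).continuousOn).bddAbove
  have hFeq : ∀ {t : ℝ} {x : E}, x ∈ K → (∀ y ∈ K, g y t ≤ g x t) → F t = g x t :=
    fun hx h => sSup_image_eq_max hx h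
  have hFge : ∀ (t : ℝ) {x : E}, x ∈ K → g x t ≤ F t := fun t x hx =>
    le_csSup (hbdd t) ⟨_, hx, rfl⟩
  obtain ⟨z, hzK, hz⟩ := hmax 0
  have hF0 : F 0 = g z 0 := hFeq hzK hz
  have hAne : A.Nonempty := ⟨z, hzK, hz⟩
  have hAeq : A = K ∩ (fun x => g x 0) ⁻¹' Ici (g z 0) := by
    ext x
    constructor
    · rintro ⟨hxK, hx⟩; exact ⟨hxK, hx z hzK⟩
    · rintro ⟨hxK, hx⟩; exact ⟨hxK, fun y hy => (hz y hy).trans hx⟩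
  have hAc : IsCompact A := by
    rw [hAeq]; exact hK.inter_right (isClosed_Ici.preimage (hgx 0))
  obtain ⟨x₀, hx₀A, hx₀min⟩ := hAc.exists_isMinOn hAne (hDx 0).continuousOn
  have hx₀K : x₀ ∈ K := hx₀A.1
  have hm : m = D x₀ 0 := sInf_image_eq_min hx₀A (fun y hy => hx₀min hy)
  have hmle : ∀ x ∈ A, m ≤ D x 0 := fun x hx => hm ▸ hx₀min hx
  have hF0max : ∀ y ∈ K, g y 0 ≤ F 0 := fun y hy => hF0 ▸ hz y hy
  have hF0x₀ : F 0 = g x₀ 0 := hFeq hx₀K hx₀A.2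
  rw [tendsto_order]
  constructor
  · -- lower bound: for b < m, eventually b < slope F 0 t
    intro b hb
    set b' : ℝ := (b + m) / 2 with hb'
    have hbb' : b < b' := by rw [hb']; linarith
    have hb'm : b' < m := by rw [hb']; linarith
    set U : Set E := {x | b' < D x 0} with hU
    have hUopen : IsOpen U := isOpen_lt continuous_const (hDx 0)
    have hAU : A ⊆ U := fun x hx => lt_of_lt_of_le hb'm (hmle x hx)
    set K' : Set E := K \ U with hK'
    have hK'c : IsCompact K' := hK.diff hUopen
    -- gap value c
    obtain ⟨c, hcF0, hc⟩ : ∃ c < F 0, ∀ x ∈ K', g x 0 ≤ c := by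
      rcases K'.eq_empty_or_nonempty with hc | hc
      · exact ⟨F 0 - 1, by linarith, fun x hx => by rw [hc] at hx; exact absurd hx (notMem_empty x)⟩
      · obtain ⟨x₁, hx₁, hmx₁⟩ := hK'c.exists_isMaxOn hc (hgx 0).continuousOn
        refine ⟨g x₁ 0, ?_, fun x hx => hmx₁ hx⟩
        rcases lt_or_eq_of_le (hF0max x₁ hx₁.1) with h | h
        · exact h
        · exact absurd (hAU ⟨hx₁.1, fun y hy => h ▸ hF0max y hy⟩) hx₁.2
    set c' : ℝ := (c + F 0) / 2 with hc'
    have hcc' : c < c' := by rw [hc']; linarith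
    have hc'F0 : c' < F 0 := by rw [hc']; linarith
    -- tube 1 : on K', g x t < c' for small t
    have htube1 : ∀ᶠ t in 𝓝 (0:ℝ), ∀ x ∈ K', g x t < c' := by
      have := tube_eventually hK'c (W := {p : E × ℝ | g p.1 p.2 < c'})
        (isOpen_lt hg continuous_const)
        (fun x hx => lt_of_le_of_lt (hc x hx) hcc')
      exact this
    -- g x₀ t > c' for small t
    have htube2 : ∀ᶠ t in 𝓝 (0:ℝ), c' < g x₀ t := by
      have : Tendsto (fun t => g x₀ t) (𝓝 0) (𝓝 (g x₀ 0)) := (hgt x₀).tendsto 0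
      exact this.eventually_const_lt (hF0x₀ ▸ hc'F0)
    -- tube 3 : |D x t - D x 0| < b' - b on K for small t
    have htube3 : ∀ᶠ t in 𝓝 (0:ℝ), ∀ x ∈ K, |D x t - D x 0| < b' - b := by
      have hcont : Continuous fun p : E × ℝ => |D p.1 p.2 - D p.1 0| :=
        (hD.sub ((hDx 0).comp continuous_fst)).abs
      have := tube_eventually hK (W := {p : E × ℝ | |D p.1 p.2 - D p.1 0| < b' - b})
        (isOpen_lt hcont continuous_const)
        (fun x hx => by simp [sub_self, abs_zero]; linarith)
      exact this
    obtain ⟨δ, hδpos, hδ⟩ := Metric.eventually_nhds_iff.mp (htube1.and (htube2.and htube3))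
    have hIoo : Ioo (-δ) 0 ∈ 𝓝[Iio (0:ℝ)] 0 := Ioo_mem_nhdsLT_of_mem ⟨by linarith, le_refl 0⟩
    filter_upwards [hIoo] with t ht
    have htneg : t < 0 := ht.2
    have htδ : dist t 0 < δ := by rw [Real.dist_eq, sub_zero, abs_of_neg htneg]; linarith [ht.1]
    obtain ⟨h1, h2, h3⟩ := hδ htδ
    obtain ⟨xt, hxtK, hxt⟩ := hmax t
    have hFt : F t = g xt t := hFeq hxtK hxt
    have hxtU : xt ∈ U := by
      by_contra hcon
      have : xt ∈ K' := ⟨hxtK, hcon⟩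
      exact absurd (lt_of_lt_of_le h2 (hxt x₀ hx₀K)) (not_lt.mpr (h1 xt this).le)
    -- MVT
    obtain ⟨s, hs, hseq⟩ := exists_hasDerivAt_eq_slope (g xt) (D xt) htneg
      (hgt xt).continuousOn (fun s _ => hder xt s)
    have hsδ : dist s 0 < δ := by
      rw [Real.dist_eq, sub_zero, abs_of_neg hs.2]; linarith [hs.1, ht.1]
    obtain ⟨_, _, h3'⟩ := hδ hsδ
    have hDs : b < D xt s := by
      have := abs_lt.mp (h3' xt hxtK)
      have hxtU' : b' < D xt 0 := hxtU
      linarith [this.1]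
    have ht0 : t ≠ 0 := ne_of_lt htneg
    have hdiff : g xt t - g xt 0 = t * D xt s := by
      have h := hseq
      rw [eq_div_iff (sub_ne_zero.mpr (Ne.symm ht0))] at h
      linear_combination h
    have hFle : F t - F 0 ≤ t * D xt s := by
      rw [← hdiff, hFt]
      have := hFge 0 hxtK
      linarith
    have hslope : D xt s ≤ slope F 0 t := by
      rw [slope_def_field]
      rw [le_div_iff_of_neg (by simpa using htneg)]
      simpa [mul_comm] using hFle
    exact lt_of_lt_of_le hDs hslope
  · -- upper bound: for b > m, eventually slope F 0 t < b
    intro b hb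
    have h1 : Tendsto (slope (g x₀) 0) (𝓝[≠] 0) (𝓝 m) := by
      rw [hm]; exact hasDerivAt_iff_tendsto_slope.mp (hder x₀ 0)
    have h2 : Tendsto (slope (g x₀) 0) (𝓝[Iio 0] 0) (𝓝 m) :=
      h1.mono_left (nhdsWithin_mono _ (fun t ht => ne_of_lt ht))
    filter_upwards [h2.eventually_lt_const hb, self_mem_nhdsWithin] with t hslope htneg
    have htneg' : t < 0 := htneg
    refine lt_of_le_of_lt ?_ hslope
    rw [slope_def_field, slope_def_field]
    rw [hF0x₀]
    apply div_le_div_of_nonpos_of_le (by linarith)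
    have := hFge t hx₀K
    linarith

/-- Danskin-type left derivative: for `O ⋐ Ω` and `u, φ` of class `C¹`,
the left derivative at `t = 0` of `t ↦ E_∞(u + tφ, O)` exists and equals
`min_{argmax} (H_P(·,u,Du) : Dφ + H_η(·,u,Du) ⋅ φ)`. -/
theorem danskin_left_derivative
    (n N : ℕ) (Ω O : Set (EuclideanSpace ℝ (Fin n)))
    (hΩ : IsOpen Ω) (hO : IsOpen O) (hne : O.Nonempty)
    (hOc : IsCompact (closure O)) (hOΩ : closure O ⊆ Ω)
    (H : EuclideanSpace ℝ (Fin n) → EuclideanSpace ℝ (Fin N) →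
      (EuclideanSpace ℝ (Fin n) →L[ℝ] EuclideanSpace ℝ (Fin N)) → ℝ)
    (hH : ContDiff ℝ 1 fun p : EuclideanSpace ℝ (Fin n) × EuclideanSpace ℝ (Fin N) ×
      (EuclideanSpace ℝ (Fin n) →L[ℝ] EuclideanSpace ℝ (Fin N)) => H p.1 p.2.1 p.2.2)
    (u φ : EuclideanSpace ℝ (Fin n) → EuclideanSpace ℝ (Fin N))
    (hu : ContDiff ℝ 1 u) (hφ : ContDiff ℝ 1 φ) :
    HasDerivWithinAt (fun t : ℝ => Einf H O fun x => u x + t • φ x)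
      (sInf (firstVar H u φ '' argmaxSet (fun x => H x (u x) (fderiv ℝ u x)) O))
      (Set.Iic 0) 0 := by
  have hud : Differentiable ℝ u := hu.differentiable one_ne_zero
  have hφd : Differentiable ℝ φ := hφ.differentiable one_ne_zero
  have hPc : Continuous fun x => fderiv ℝ u x := hu.continuous_fderiv one_ne_zero
  have hQc : Continuous fun x => fderiv ℝ φ x := hφ.continuous_fderiv one_ne_zero
  set Hf : (EuclideanSpace ℝ (Fin n) × EuclideanSpace ℝ (Fin N) ×
      (EuclideanSpace ℝ (Fin n) →L[ℝ] EuclideanSpace ℝ (Fin N))) → ℝ :=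
    fun p => H p.1 p.2.1 p.2.2 with hHf
  have hHfd : Differentiable ℝ Hf := hH.differentiable one_ne_zero
  have hHfc : Continuous fun p => fderiv ℝ Hf p := hH.continuous_fderiv one_ne_zero
  set g : EuclideanSpace ℝ (Fin n) → ℝ → ℝ :=
    fun x t => H x (u x + t • φ x) (fderiv ℝ u x + t • fderiv ℝ φ x) with hgdef
  set D : EuclideanSpace ℝ (Fin n) → ℝ → ℝ :=
    fun x t => fderiv ℝ Hf (x, (u x + t • φ x, fderiv ℝ u x + t • fderiv ℝ φ x))
      (0, (φ x, fderiv ℝ φ x)) with hDdef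
  have hΨ : Continuous fun p : EuclideanSpace ℝ (Fin n) × ℝ =>
      ((p.1, (u p.1 + p.2 • φ p.1, fderiv ℝ u p.1 + p.2 • fderiv ℝ φ p.1)) :
        EuclideanSpace ℝ (Fin n) × EuclideanSpace ℝ (Fin N) ×
          (EuclideanSpace ℝ (Fin n) →L[ℝ] EuclideanSpace ℝ (Fin N))) := by
    refine continuous_fst.prodMk (Continuous.prodMk ?_ ?_)
    · exact (hud.continuous.comp continuous_fst).add
        (continuous_snd.smul (hφd.continuous.comp continuous_fst))
    · exact (hPc.comp continuous_fst).add
        (continuous_snd.smul (hQc.comp continuous_fst))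
  have hg : Continuous fun p : EuclideanSpace ℝ (Fin n) × ℝ => g p.1 p.2 :=
    hH.continuous.comp hΨ
  have hD : Continuous fun p : EuclideanSpace ℝ (Fin n) × ℝ => D p.1 p.2 := by
    exact (hHfc.comp hΨ).clm_apply (continuous_const.prodMk
      ((hφd.continuous.comp continuous_fst).prodMk (hQc.comp continuous_fst)))
  have hder : ∀ x t, HasDerivAt (g x) (D x t) t := by
    intro x t
    have hpath : HasDerivAt (fun s : ℝ =>
        ((x, (u x + s • φ x, fderiv ℝ u x + s • fderiv ℝ φ x)) :
          EuclideanSpace ℝ (Fin n) × EuclideanSpace ℝ (Fin N) ×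
            (EuclideanSpace ℝ (Fin n) →L[ℝ] EuclideanSpace ℝ (Fin N))))
        ((0, (φ x, fderiv ℝ φ x))) t := by
      refine HasDerivAt.prodMk (hasDerivAt_const t x) (HasDerivAt.prodMk ?_ ?_)
      · exact ((hasDerivAt_const t (u x)).add ((hasDerivAt_id t).smul_const (φ x))).congr_deriv
          (by simp)
      · exact ((hasDerivAt_const t (fderiv ℝ u x)).add
          ((hasDerivAt_id t).smul_const (fderiv ℝ φ x))).congr_deriv (by simp)
    exact (hHfd _).hasFDerivAt.comp_hasDerivAt t hpath
  have hEinf : ∀ t : ℝ, (Einf H O fun x => u x + t • φ x)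
      = sSup ((fun x => g x t) '' closure O) := by
    intro t
    unfold Einf
    congr 1
    refine Set.image_congr fun x _ => ?_
    have hfd : fderiv ℝ (fun y => u y + t • φ y) x = fderiv ℝ u x + t • fderiv ℝ φ x :=
      ((hud x).hasFDerivAt.add ((hφd x).hasFDerivAt.const_smul t)).fderiv
    rw [hfd]
  have hargmax : argmaxSet (fun x => H x (u x) (fderiv ℝ u x)) O
      = {x ∈ closure O | ∀ y ∈ closure O, g y 0 ≤ g x 0} := by
    ext x
    simp only [argmaxSet, Set.mem_setOf_eq, hgdef, zero_smul, add_zero]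
    simp_rw [zero_smul ℝ (fderiv ℝ φ _), add_zero]
  have hfv : ∀ x, firstVar H u φ x = D x 0 := by
    intro x
    have h1 : HasFDerivAt (fun p : EuclideanSpace ℝ (Fin N) ×
        (EuclideanSpace ℝ (Fin n) →L[ℝ] EuclideanSpace ℝ (Fin N)) => H x p.1 p.2)
        ((fderiv ℝ Hf (x, (u x, fderiv ℝ u x))).comp
          (((0 : (EuclideanSpace ℝ (Fin N) ×
            (EuclideanSpace ℝ (Fin n) →L[ℝ] EuclideanSpace ℝ (Fin N)))
              →L[ℝ] EuclideanSpace ℝ (Fin n))).prod (ContinuousLinearMap.id ℝ _)))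
        (u x, fderiv ℝ u x) :=
      (hHfd _).hasFDerivAt.comp _ (HasFDerivAt.prodMk (hasFDerivAt_const x _) (hasFDerivAt_id _))
    unfold firstVar
    rw [h1.fderiv]
    simp only [hDdef, zero_smul, add_zero, ContinuousLinearMap.comp_apply,
      ContinuousLinearMap.prod_apply, ContinuousLinearMap.zero_apply,
      ContinuousLinearMap.coe_id', id_eq]
    simp_rw [zero_smul ℝ (fderiv ℝ φ _), add_zero]
  have hKne : (closure O).Nonempty := hne.closure
  have hgoal := danskin_aux hOc hKne g D hg hD hder
  rw [hasDerivWithinAt_iff_tendsto_slope]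
  have hset : Set.Iic (0:ℝ) \ {0} = Set.Iio 0 := by
    ext x
    simp only [Set.mem_diff, Set.mem_Iic, Set.mem_singleton_iff, Set.mem_Iio]
    constructor
    · rintro ⟨h1, h2⟩; exact lt_of_le_of_ne h1 h2
    · intro h; exact ⟨le_of_lt h, ne_of_lt h⟩
  rw [hset]
  have hfun : (fun t : ℝ => Einf H O fun x => u x + t • φ x)
      = fun t => sSup ((fun x => g x t) '' closure O) := funext hEinf
  rw [hfun, hargmax, Set.image_congr fun x _ => hfv x]
  exact hgoal
end
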